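/- Let I = I_{d;a_1,…,a_n} be a Veronese type ideal with 1 < d < Σ a_i and all a_i ≥ 1, and let A ⊆ [n] be nonempty with Σ_{i ∉ A} a_i ≤ d - 1. Then the smallest integer k ≥ 1 such that P_A ∈ Ass(S/I^k) equals ⌈(|A| - 1)/(Σ_{i=1}^n a_i - d)⌉ when |A| ≥ 2, and equals 1 when |A| = 1. In particular the maximal ideal (x_1,…,x_n) lies in Ass(S/I^k) exactly for k ≥ ⌈(n-1)/(Σ a_i - d)⌉. -/

import Mathlib

open MvPolynomial

/-- The monomial prime ideal `P_A = (x_i : i ∈ A)`. -/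
noncomputable def PF {K : Type} [Field K] {n : ℕ} (A : Finset (Fin n)) :
    Ideal (MvPolynomial (Fin n) K) :=
  Ideal.span ((fun i => (X i : MvPolynomial (Fin n) K)) '' ↑A)

/-- The ideal of Veronese type `I_{d;a_1,…,a_n}`. -/
noncomputable def veroneseIdeal (K : Type) [Field K] {n : ℕ} (d : ℕ) (a : Fin n → ℕ) :
    Ideal (MvPolynomial (Fin n) K) :=
  Ideal.span ((fun u : Fin n →₀ ℕ => (monomial u (1 : K) : MvPolynomial (Fin n) K)) ''
    {u | ∑ i, u i = d ∧ ∀ i, u i ≤ a i})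

/-!
A monomial `x^m` lies in `I_{D;b}` iff `Σ min(mᵢ, bᵢ) ≥ D`, and `I_{d;a}^k = I_{kd;ka}`, because a
generator of `I_{(k+1)d;(k+1)a}` can be split as a generator of `I_{d;a}` times one of
`I_{kd;ka}`. For a monomial ideal `J`, `P_A ∈ Ass(S/J)` forces a monomial `x^m ∉ J` with
`xᵢ x^m ∈ J` for all `i ∈ A`; with the `min` criterion this gives `D + |A| ≤ Σ bᵢ + 1`.
Conversely, if this holds and `Σ_{i ∉ A} bᵢ < D`, the exponent `m` with `mᵢ = bᵢ` off `A`,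
`mᵢ < bᵢ` on `A` and `Σ mᵢ = D - 1` satisfies `J : x^m = P_A`. For `D = kd`, `b = ka` the
inequality reads `|A| - 1 ≤ k (Σ aᵢ - d)`, whose least solution `k ≥ 1` is the stated one.
-/

theorem exists_finsupp_between_sum_eq {ι : Type*} [Fintype ι] {f g : ι → ℕ} {t : ℕ}
    (hfg : f ≤ g) (hf : ∑ i, f i ≤ t) (hg : t ≤ ∑ i, g i) :
    ∃ h : ι →₀ ℕ, f ≤ ⇑h ∧ ⇑h ≤ g ∧ ∑ i, h i = t := by
  obtain ⟨k, rfl⟩ := Nat.exists_eq_add_of_le hf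
  clear hf
  induction k with
  | zero => exact ⟨Finsupp.equivFunOnFinite.symm f, by simpa using hfg⟩
  | succ k ih =>
    obtain ⟨h, hfh, hhg, hsum⟩ := ih (by omega)
    obtain ⟨i, -, hi⟩ := Finset.exists_lt_of_sum_lt (s := Finset.univ) (f := ⇑h) (g := g)
      (by omega)
    refine ⟨h + Finsupp.single i 1, fun j => ?_, fun j => ?_, ?_⟩
    · exact (hfh j).trans (by simp)
    · rcases eq_or_ne j i with rfl | hji
      · simpa using hi
      · simpa [Finsupp.single_apply, hji.symm] using hhg j
    · simp [Finset.sum_add_distrib, hsum, add_assoc]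

theorem exists_le_sum_eq_of_sum_eq_succ_mul {σ : Type*} [Fintype σ] {k d : ℕ} {a : σ → ℕ}
    {u : σ →₀ ℕ} (hu : ∑ i, u i = (k + 1) * d) (hua : ∀ i, u i ≤ (k + 1) * a i) :
    ∃ w : σ →₀ ℕ, w ≤ u ∧ (∑ i, w i = d ∧ ∀ i, w i ≤ a i) ∧ ∀ i, u i - w i ≤ k * a i := by
  -- `w` is taken between `u - k a` and `min u a`; these bounds bracket `d` since
  -- `(k + 1) (u - k a) ≤ u ≤ (k + 1) min u a` pointwise.
  have hua' : ∀ i, u i ≤ k * a i + a i := fun i => by rw [← add_one_mul]; exact hua i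
  have hlo : ∀ i, (k + 1) * (u i - k * a i) ≤ u i := fun i => by
    rcases le_total (u i) (k * a i) with h | h
    · simp [Nat.sub_eq_zero_of_le h]
    · obtain ⟨t, ht⟩ := Nat.exists_eq_add_of_le h
      have : k * t ≤ k * a i := Nat.mul_le_mul_left k (by have := hua' i; omega)
      rw [ht, Nat.add_sub_cancel_left, add_one_mul]
      omega
  have hhi : ∀ i, u i ≤ (k + 1) * min (u i) (a i) := fun i => by
    rcases le_total (u i) (a i) with h | h
    · rw [min_eq_left h]; exact Nat.le_mul_of_pos_left _ k.succ_pos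
    · rw [min_eq_right h]; exact hua i
  obtain ⟨w, hwlo, hwhi, hw⟩ := exists_finsupp_between_sum_eq (t := d)
    (f := fun i => u i - k * a i) (g := fun i => min (u i) (a i))
    (fun i => le_min tsub_le_self (by dsimp only; have := hua' i; omega))
    (Nat.le_of_mul_le_mul_left (by
      rw [Finset.mul_sum, ← hu]; exact Finset.sum_le_sum fun i _ => hlo i) k.succ_pos)
    (Nat.le_of_mul_le_mul_left (by
      rw [Finset.mul_sum, ← hu]; exact Finset.sum_le_sum fun i _ => hhi i) k.succ_pos)
  refine ⟨w, Finsupp.le_def.mpr fun i => (hwhi i).trans (min_le_left _ _),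
    ⟨hw, fun i => (hwhi i).trans (min_le_right _ _)⟩, fun i => ?_⟩
  have : u i - k * a i ≤ w i := hwlo i
  omega

theorem exists_veronese_exponent_le_iff {σ : Type*} [Fintype σ] {D : ℕ} {b : σ → ℕ}
    {m : σ →₀ ℕ} :
    (∃ v ∈ {u : σ →₀ ℕ | ∑ i, u i = D ∧ ∀ i, u i ≤ b i}, v ≤ m) ↔
      D ≤ ∑ i, min (m i) (b i) := by
  constructor
  · rintro ⟨v, ⟨rfl, hvb⟩, hvm⟩
    exact Finset.sum_le_sum fun i _ => le_min (Finsupp.le_def.mp hvm i) (hvb i)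
  · intro hD
    obtain ⟨v, -, hv, rfl⟩ := exists_finsupp_between_sum_eq (f := 0) (g := fun i => min (m i) (b i))
      (fun i => Nat.zero_le _) (by simp) hD
    exact ⟨v, ⟨rfl, fun i => (hv i).trans (min_le_right _ _)⟩,
      Finsupp.le_def.mpr fun i => (hv i).trans (min_le_left _ _)⟩

section SumMin

variable {σ : Type*} [Fintype σ] [DecidableEq σ] {D : ℕ} {b : σ → ℕ} {A : Finset σ}

theorem sum_min_add_single (m : σ →₀ ℕ) (i : σ) :
    ∑ j, min ((m + Finsupp.single i 1 : σ →₀ ℕ) j) (b j) =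
      ∑ j, min (m j) (b j) + if m i < b i then 1 else 0 := by
  have hrest : ∑ j ∈ Finset.univ.erase i, min ((m + Finsupp.single i 1 : σ →₀ ℕ) j) (b j) =
      ∑ j ∈ Finset.univ.erase i, min (m j) (b j) :=
    Finset.sum_congr rfl fun j hj => by simp [(Finset.ne_of_mem_erase hj).symm]
  rw [← Finset.add_sum_erase _ _ (Finset.mem_univ i),
    ← Finset.add_sum_erase _ _ (Finset.mem_univ i), hrest]
  simp only [Finsupp.add_apply, Finsupp.single_eq_same]
  split_ifs <;> omega

theorem add_card_le_of_sum_min_lt (hA : A.Nonempty) {m : σ →₀ ℕ}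
    (hm : ∑ i, min (m i) (b i) < D)
    (hstep : ∀ i ∈ A, D ≤ ∑ j, min ((m + Finsupp.single i 1 : σ →₀ ℕ) j) (b j)) :
    D + A.card ≤ ∑ i, b i + 1 := by
  have hmA : ∀ i ∈ A, m i < b i := fun i hi => by
    by_contra h
    have := hstep i hi
    rw [sum_min_add_single, if_neg h] at this
    omega
  obtain ⟨i₀, hi₀⟩ := hA
  have hD : D ≤ ∑ i, min (m i) (b i) + 1 := by
    have := hstep i₀ hi₀
    rwa [sum_min_add_single, if_pos (hmA i₀ hi₀)] at this
  have hcard : ∑ i, min (m i) (b i) + A.card ≤ ∑ i, b i := by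
    rw [Finset.card_eq_sum_ones, ← Finset.sum_add_sum_compl A, ← Finset.sum_add_sum_compl A b,
      add_right_comm, ← Finset.sum_add_distrib]
    gcongr with i hi i
    · have := hmA i hi; omega
    · exact min_le_right _ _
  omega

theorem exists_exponent_le_sum_min_add_iff (hbA : ∀ i ∈ A, 1 ≤ b i) (hAb : ∑ i ∈ Aᶜ, b i < D)
    (hD : D + A.card ≤ ∑ i, b i + 1) :
    ∃ m : σ →₀ ℕ, ∀ w : σ →₀ ℕ, D ≤ ∑ j, min ((w + m) j) (b j) ↔ ∃ i ∈ A, w i ≠ 0 := by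
  have hsum_piecewise : ∀ f g : σ → ℕ, ∑ i, A.piecewise f g i = ∑ i ∈ A, f i + ∑ i ∈ Aᶜ, g i :=
    fun f g => by rw [Finset.sum_piecewise, Finset.univ_inter, Finset.compl_eq_univ_sdiff]
  have hpred : ∑ i ∈ A, (b i - 1) + A.card = ∑ i ∈ A, b i := by
    rw [Finset.card_eq_sum_ones, ← Finset.sum_add_distrib]
    exact Finset.sum_congr rfl fun i hi => by have := hbA i hi; omega
  obtain ⟨m, hlo, hhi, hsum⟩ := exists_finsupp_between_sum_eq (t := D - 1)
    (f := A.piecewise 0 b) (g := A.piecewise (fun i => b i - 1) b)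
    (fun i => by by_cases hi : i ∈ A <;> simp [hi])
    (by rw [hsum_piecewise]; simp only [Pi.zero_apply, Finset.sum_const_zero]; omega)
    (by rw [hsum_piecewise]; rw [← Finset.sum_add_sum_compl A b] at hD; omega)
  have hmA : ∀ i ∈ A, m i < b i := fun i hi => by
    have h := hhi i
    simp only [Finset.piecewise_eq_of_mem _ _ _ hi] at h
    have := hbA i hi
    omega
  have hmAc : ∀ i ∉ A, m i = b i := fun i hi => by
    have h₁ := hhi i
    have h₂ := hlo i
    simp only [Finset.piecewise_eq_of_notMem _ _ _ hi] at h₁ h₂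
    omega
  have hmb : ∀ i, m i ≤ b i := fun i => by
    by_cases hi : i ∈ A
    · exact (hmA i hi).le
    · exact (hmAc i hi).le
  refine ⟨m, fun w => ⟨fun hw => ?_, fun ⟨i, hiA, hwi⟩ => ?_⟩⟩
  · by_contra! hwA
    have : ∑ j, min ((w + m) j) (b j) = ∑ j, m j := Finset.sum_congr rfl fun j _ => by
      have := hmb j
      by_cases hj : j ∈ A
      · have := hwA j hj; simp only [Finsupp.add_apply]; omega
      · have := hmAc j hj; simp only [Finsupp.add_apply]; omega
    omega
  · calc D = ∑ j, (m j + if j = i then 1 else 0) := by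
          rw [Finset.sum_add_distrib, Finset.sum_ite_eq', if_pos (Finset.mem_univ i)]
          omega
      _ ≤ _ := Finset.sum_le_sum fun j _ => by
          have := hmb j
          split_ifs with hji
          · subst hji; have := hmA j hiA; simp only [Finsupp.add_apply]; omega
          · simp only [Finsupp.add_apply]; omega

end SumMin

theorem mem_associatedPrimes_quotient_iff {R : Type*} [CommRing R] [IsNoetherianRing R]
    {J P : Ideal R} :
    P ∈ associatedPrimes R (R ⧸ J) ↔ P.IsPrime ∧ ∃ f : R, ∀ r, r ∈ P ↔ r * f ∈ J := by
  rw [AssociatedPrimes.mem_iff, isAssociatedPrime_iff, Ideal.Quotient.mk_surjective.exists]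
  refine and_congr_right fun _ => exists_congr fun f => ?_
  simp only [SetLike.ext_iff, Submodule.mem_colon_singleton, Submodule.mem_bot, Algebra.smul_def,
    Ideal.Quotient.algebraMap_eq, ← map_mul, Ideal.Quotient.eq_zero_iff_mem]

section MonomialIdeal

variable {σ R : Type*}

theorem isPrime_span_X_image [CommRing R] [IsDomain R] (s : Set σ) :
    (Ideal.span (X '' s : Set (MvPolynomial σ R))).IsPrime := by
  classical
  set P := Ideal.span (X '' s : Set (MvPolynomial σ R))
  set φ : MvPolynomial σ R →ₐ[R] MvPolynomial σ R := aeval fun i => if i ∈ s then 0 else X i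
  -- `P` is the kernel of `φ`, because `φ` is the identity modulo `P`.
  have hmk : (Ideal.Quotient.mkₐ R P).comp φ = Ideal.Quotient.mkₐ R P := by
    refine algHom_ext fun i => ?_
    by_cases hi : i ∈ s
    · have : X i ∈ P := Ideal.subset_span ⟨i, hi, rfl⟩
      simp [φ, hi, Ideal.Quotient.eq_zero_iff_mem.mpr this]
    · simp [φ, hi]
  have hker : P = RingHom.ker φ := by
    refine le_antisymm (Ideal.span_le.mpr ?_) fun p hp => ?_
    · rintro _ ⟨i, hi, rfl⟩
      simp [φ, hi]
    · rw [← Ideal.Quotient.eq_zero_iff_mem, ← Ideal.Quotient.mkₐ_eq_mk R, ← hmk]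
      simp [(RingHom.mem_ker).mp hp]
  rw [hker]
  exact RingHom.ker_isPrime _

variable [CommSemiring R] {S : Set (σ →₀ ℕ)} {s : Set σ}

theorem exists_exponent_of_X_mul_mem {f : MvPolynomial σ R}
    (hf : f ∉ Ideal.span ((fun u => monomial u (1 : R)) '' S))
    (hXf : ∀ i ∈ s, X i * f ∈ Ideal.span ((fun u => monomial u (1 : R)) '' S)) :
    ∃ m : σ →₀ ℕ, (¬∃ v ∈ S, v ≤ m) ∧ ∀ i ∈ s, ∃ v ∈ S, v ≤ m + Finsupp.single i 1 := by
  simp only [mem_ideal_span_monomial_image, not_forall, exists_prop] at hf hXf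
  obtain ⟨m, hm, hmS⟩ := hf
  refine ⟨m, hmS, fun i hi => hXf i hi _ ?_⟩
  rw [mem_support_iff, X, add_comm, coeff_monomial_mul, one_mul]
  exact mem_support_iff.mp hm

theorem mem_span_X_image_iff_mul_monomial_mem {m : σ →₀ ℕ}
    (h : ∀ w : σ →₀ ℕ, (∃ v ∈ S, v ≤ w + m) ↔ ∃ i ∈ s, w i ≠ 0) (r : MvPolynomial σ R) :
    r ∈ Ideal.span (X '' s) ↔
      r * monomial m 1 ∈ Ideal.span ((fun u => monomial u (1 : R)) '' S) := by
  rw [mem_ideal_span_X_image, mem_ideal_span_monomial_image]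
  constructor
  · intro hr w hw
    rw [mem_support_iff, coeff_mul_monomial'] at hw
    split_ifs at hw with hmw
    · rw [← tsub_add_cancel_of_le hmw]
      exact (h _).mpr (hr _ (mem_support_iff.mpr (by simpa using hw)))
    · exact absurd rfl hw
  · intro hr w hw
    refine (h w).mp (hr _ ?_)
    rw [mem_support_iff, coeff_mul_monomial, mul_one]
    exact mem_support_iff.mp hw

end MonomialIdeal

theorem veroneseIdeal_mul (K : Type) [Field K] {n : ℕ} (k d : ℕ) (a : Fin n → ℕ) :
    veroneseIdeal K (k * d) (fun i => k * a i) * veroneseIdeal K d a =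
      veroneseIdeal K ((k + 1) * d) (fun i => (k + 1) * a i) := by
  unfold veroneseIdeal
  rw [Ideal.span_mul_span']
  congr 1
  ext p
  rw [Set.mem_mul]
  constructor
  · rintro ⟨_, ⟨v, ⟨hv, hva⟩, rfl⟩, _, ⟨w, ⟨hw, hwa⟩, rfl⟩, rfl⟩
    refine ⟨v + w, ⟨?_, fun i => ?_⟩, by simp [monomial_mul]⟩
    · simp only [Finsupp.add_apply, Finset.sum_add_distrib, hv, hw]
      ring
    · have : v i ≤ k * a i := hva i
      have := hwa i
      simp only [Finsupp.add_apply, add_one_mul]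
      omega
  · rintro ⟨u, ⟨hu, hua⟩, rfl⟩
    obtain ⟨w, hwu, hw, hvka⟩ := exists_le_sum_eq_of_sum_eq_succ_mul hu hua
    refine ⟨_, ⟨u - w, ⟨?_, fun i => ?_⟩, rfl⟩, _, ⟨w, hw, rfl⟩, ?_⟩
    · have : ∑ i, (u - w) i + ∑ i, w i = ∑ i, u i := by
        rw [← Finset.sum_add_distrib]
        exact Finset.sum_congr rfl fun i _ => tsub_add_cancel_of_le (Finsupp.le_def.mp hwu i)
      rw [hw.1, hu, add_one_mul] at this
      omega
    · simpa using hvka i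
    · simp [monomial_mul, tsub_add_cancel_of_le hwu]

theorem veroneseIdeal_pow (K : Type) [Field K] {n : ℕ} (k d : ℕ) (a : Fin n → ℕ) :
    veroneseIdeal K d a ^ k = veroneseIdeal K (k * d) (fun i => k * a i) := by
  induction k with
  | zero =>
    rw [pow_zero, Ideal.one_eq_top, eq_comm, Ideal.eq_top_iff_one]
    exact Ideal.subset_span ⟨0, by simp, by simp⟩
  | succ k ih => rw [pow_succ, ih, veroneseIdeal_mul]

theorem PF_mem_associatedPrimes_veroneseIdeal_iff {K : Type} [Field K] {n D : ℕ}
    {b : Fin n → ℕ} {A : Finset (Fin n)} (hA : A.Nonempty) (hbA : ∀ i ∈ A, 1 ≤ b i)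
    (hAb : ∑ i ∈ Aᶜ, b i < D) :
    PF (K := K) A ∈ associatedPrimes (MvPolynomial (Fin n) K)
        (MvPolynomial (Fin n) K ⧸ veroneseIdeal K D b) ↔
      D + A.card ≤ ∑ i, b i + 1 := by
  classical
  rw [mem_associatedPrimes_quotient_iff]
  constructor
  · rintro ⟨hP, f, hf⟩
    have hfJ : f ∉ veroneseIdeal K D b := fun h =>
      hP.ne_top ((Ideal.eq_top_iff_one _).mpr ((hf 1).mpr (by rwa [one_mul])))
    obtain ⟨m, hm, hstep⟩ := exists_exponent_of_X_mul_mem (s := ↑A) hfJ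
      fun i hi => (hf (X i)).mp (Ideal.subset_span ⟨i, hi, rfl⟩)
    rw [exists_veronese_exponent_le_iff, not_le] at hm
    exact add_card_le_of_sum_min_lt hA hm fun i hi =>
      exists_veronese_exponent_le_iff.mp (hstep i hi)
  · intro hD
    obtain ⟨m, hm⟩ := exists_exponent_le_sum_min_add_iff hbA hAb hD
    refine ⟨isPrime_span_X_image (A : Set (Fin n)), monomial m 1,
      mem_span_X_image_iff_mul_monomial_mem fun w => ?_⟩
    rw [exists_veronese_exponent_le_iff, hm]
    simp

theorem PF_mem_associatedPrimes_veroneseIdeal_pow_iff {K : Type} [Field K] {n d k : ℕ}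
    {a : Fin n → ℕ} {A : Finset (Fin n)} (hA : A.Nonempty) (haA : ∀ i ∈ A, 1 ≤ a i)
    (hAa : ∑ i ∈ Aᶜ, a i < d) (hk : 1 ≤ k) :
    PF (K := K) A ∈ associatedPrimes (MvPolynomial (Fin n) K)
        (MvPolynomial (Fin n) K ⧸ veroneseIdeal K d a ^ k) ↔
      k * d + A.card ≤ k * ∑ i, a i + 1 := by
  have hAka : ∑ i ∈ Aᶜ, k * a i < k * d := by
    rw [← Finset.mul_sum]
    exact Nat.mul_lt_mul_of_pos_left hAa hk
  rw [veroneseIdeal_pow, PF_mem_associatedPrimes_veroneseIdeal_iff hA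
    (fun i hi => Nat.mul_le_mul hk (haA i hi)) hAka, ← Finset.mul_sum]

theorem mul_add_le_mul_add_one_iff_ceilDiv_le {k d s c : ℕ} (hds : d < s) :
    k * d + c ≤ k * s + 1 ↔ (c - 1) ⌈/⌉ (s - d) ≤ k := by
  have := Nat.mul_le_mul_left k hds.le
  rw [ceilDiv_le_iff_le_mul (by omega), Nat.sub_mul, mul_comm s, mul_comm d]
  omega

theorem ite_eq_max_one_ceilDiv {c s : ℕ} (hc : 1 ≤ c) (hs : 0 < s) :
    (if c = 1 then 1 else (c - 1) ⌈/⌉ s) = max 1 ((c - 1) ⌈/⌉ s) := by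
  split_ifs with hc1
  · simp [hc1]
  · refine (max_eq_right ?_).symm
    by_contra! h
    rw [Nat.lt_one_iff, ← nonpos_iff_eq_zero, ceilDiv_le_iff_le_mul hs] at h
    omega

/-- For a Veronese type ideal `I = I_{d;a_1,…,a_n}` with `1 < d < Σ aᵢ`, all `aᵢ ≥ 1`, and a
nonempty `A ⊆ [n]` with `Σ_{i ∉ A} aᵢ ≤ d - 1`: the least `k ≥ 1` with `P_A ∈ Ass(S/I^k)`
is `⌈(|A| - 1)/(Σ aᵢ - d)⌉` if `|A| ≥ 2`, and `1` if `|A| = 1`. In particular, for `k ≥ 1`,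
the maximal ideal lies in `Ass(S/I^k)` exactly when `k ≥ ⌈(n - 1)/(Σ aᵢ - d)⌉`. -/
theorem stmt19 {K : Type} [Field K] {n : ℕ} (d : ℕ) (a : Fin n → ℕ)
    (hd : 1 < d) (hlt : d < ∑ i, a i) (hone : ∀ i, 1 ≤ a i)
    (A : Finset (Fin n)) (hA : A.Nonempty) (hAa : ∑ i ∈ Aᶜ, a i ≤ d - 1) :
    IsLeast {k : ℕ | 1 ≤ k ∧ PF (K := K) A ∈ associatedPrimes (MvPolynomial (Fin n) K)
        (MvPolynomial (Fin n) K ⧸ (veroneseIdeal K d a) ^ k)}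
      (if A.card = 1 then 1 else (A.card - 1) ⌈/⌉ (∑ i, a i - d)) ∧
    ∀ k : ℕ, 1 ≤ k →
      (Ideal.span (Set.range (X : Fin n → MvPolynomial (Fin n) K)) ∈
          associatedPrimes (MvPolynomial (Fin n) K)
            (MvPolynomial (Fin n) K ⧸ (veroneseIdeal K d a) ^ k) ↔
        (n - 1) ⌈/⌉ (∑ i, a i - d) ≤ k) := by
  have hcrit : ∀ B : Finset (Fin n), B.Nonempty → ∑ i ∈ Bᶜ, a i < d → ∀ k, 1 ≤ k →
      (PF (K := K) B ∈ associatedPrimes (MvPolynomial (Fin n) K)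
          (MvPolynomial (Fin n) K ⧸ veroneseIdeal K d a ^ k) ↔
        (B.card - 1) ⌈/⌉ (∑ i, a i - d) ≤ k) := fun B hB hBa k hk =>
    (PF_mem_associatedPrimes_veroneseIdeal_pow_iff hB (fun i _ => hone i) hBa hk).trans
      (mul_add_le_mul_add_one_iff_ceilDiv_le hlt)
  refine ⟨?_, fun k hk => ?_⟩
  · have hcritA := hcrit A hA (by omega)
    rw [ite_eq_max_one_ceilDiv hA.card_pos (by omega)]
    exact ⟨⟨le_max_left _ _, (hcritA _ (le_max_left _ _)).mpr (le_max_right _ _)⟩,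
      fun k ⟨hk, hkA⟩ => max_le hk ((hcritA k hk).mp hkA)⟩
  · have huniv : Ideal.span (Set.range (X : Fin n → MvPolynomial (Fin n) K)) = PF Finset.univ := by
      rw [PF, Finset.coe_univ, Set.image_univ]
    rw [huniv, hcrit Finset.univ ⟨hA.choose, Finset.mem_univ _⟩ (by simp; omega) k hk,
      Finset.card_univ, Fintype.card_fin]
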